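/- Monotonic improvement of the Frobenius norm discrepancy in the noiseless case: Let 0 < d < n, let Ū and U_t be n×d matrices with orthonormal columns, and let the observation be x = v = Ū s for some s ∈ ℝ^d. Write v_∥ = U_t U_tᵀ v and v_⊥ = v − v_∥, and assume v_∥ ≠ 0 and v_⊥ ≠ 0. Apply one GROUSE update with step size θ = arctan(‖v_⊥‖/‖v_∥‖) (α = 0). Then ε_t − ε_{t+1} = 1 − ‖Ū Ūᵀ v_∥‖²/‖v_∥‖². -/

import Mathlib

/-!
With the greedy angle `θ = arctan (‖v_⊥‖ / ‖v_∥‖)` we have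
`cos θ · v_∥/‖v_∥‖ + sin θ · v_⊥/‖v_⊥‖ = v/‖v‖`, so the GROUSE step is the rank-one update
`U⁺ = U + (z - U b) bᵀ` with `b = w/‖w‖` and `z = v/‖v‖`: it keeps `U` on `b⊥` and sends `b` to `z`.
For a unit vector `b`, redirecting a matrix `A` in this way changes its squared Frobenius norm by
`‖z‖² - ‖A b‖²`.
Applied to `A = ŪᵀU`, the gain is `‖Ūᵀ v‖² / ‖v‖² = 1` since `v` lies in the range of `Ū`, and the
loss is `‖Ūᵀ v_∥‖² / ‖v_∥‖² = ‖Ū Ūᵀ v_∥‖² / ‖v_∥‖²`.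
-/

open Matrix

noncomputable def vnorm {m : Type*} [Fintype m] (x : m → ℝ) : ℝ :=
  Real.sqrt (∑ i, x i ^ 2)

/-- `U` has orthonormal columns. -/
def OrthonormalCols {n d : ℕ} (U : Matrix (Fin n) (Fin d) ℝ) : Prop :=
  Uᵀ * U = 1

/-- One GROUSE update with step angle `θ`: with `w = Uᵀ x`, `p = U w`, `r = x − p`,
`U⁺ = U + (cos θ · p/‖p‖ + sin θ · r/‖r‖ − p/‖p‖) wᵀ/‖w‖`. -/
noncomputable def grouseUpdate {n d : ℕ} (U : Matrix (Fin n) (Fin d) ℝ) (x : Fin n → ℝ)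
    (θ : ℝ) : Matrix (Fin n) (Fin d) ℝ :=
  let w : Fin d → ℝ := Uᵀ *ᵥ x
  let p : Fin n → ℝ := U *ᵥ w
  let r : Fin n → ℝ := x - p
  U + Matrix.of (fun i j =>
    ((Real.cos θ * (p i / vnorm p) + Real.sin θ * (r i / vnorm r)) - p i / vnorm p)
      * (w j / vnorm w))

/-- Frobenius norm discrepancy `ε = d − ‖Ūᵀ U‖_F²`. -/
noncomputable def epsDisc {n d : ℕ} (Ub U : Matrix (Fin n) (Fin d) ℝ) : ℝ :=
  (d : ℝ) - ∑ i, ∑ j, ((Ubᵀ * U) i j) ^ 2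

section vnorm

variable {m : Type*} [Fintype m]

theorem vnorm_eq_sqrt_dotProduct (x : m → ℝ) : vnorm x = Real.sqrt (x ⬝ᵥ x) := by
  simp only [vnorm, dotProduct, sq]

theorem dotProduct_self_nonneg (x : m → ℝ) : 0 ≤ x ⬝ᵥ x :=
  Finset.sum_nonneg fun i _ => mul_self_nonneg (x i)

theorem vnorm_nonneg (x : m → ℝ) : 0 ≤ vnorm x :=
  Real.sqrt_nonneg _

theorem vnorm_sq (x : m → ℝ) : vnorm x ^ 2 = x ⬝ᵥ x := by
  rw [vnorm_eq_sqrt_dotProduct, Real.sq_sqrt (dotProduct_self_nonneg x)]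

theorem vnorm_pos {x : m → ℝ} (hx : x ≠ 0) : 0 < vnorm x := by
  rw [vnorm_eq_sqrt_dotProduct]
  exact Real.sqrt_pos.mpr <|
    (dotProduct_self_nonneg x).lt_of_ne' (dotProduct_self_eq_zero.not.mpr hx)

theorem inv_vnorm_smul_dotProduct_self {x : m → ℝ} (hx : vnorm x ≠ 0) :
    ((vnorm x)⁻¹ • x) ⬝ᵥ ((vnorm x)⁻¹ • x) = 1 := by
  rw [smul_dotProduct, dotProduct_smul, ← vnorm_sq, smul_eq_mul, smul_eq_mul]
  field_simp

end vnorm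

namespace OrthonormalCols

variable {n d : ℕ} {U : Matrix (Fin n) (Fin d) ℝ}

theorem dotProduct_mulVec (hU : OrthonormalCols U) (x y : Fin d → ℝ) :
    (U *ᵥ x) ⬝ᵥ (U *ᵥ y) = x ⬝ᵥ y := by
  rw [Matrix.dotProduct_mulVec, ← vecMul_transpose, vecMul_vecMul, hU, vecMul_one]

theorem vnorm_mulVec (hU : OrthonormalCols U) (x : Fin d → ℝ) : vnorm (U *ᵥ x) = vnorm x := by
  rw [vnorm_eq_sqrt_dotProduct, vnorm_eq_sqrt_dotProduct, hU.dotProduct_mulVec]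

theorem vnorm_sq_eq_add (hU : OrthonormalCols U) (x : Fin n → ℝ) :
    vnorm x ^ 2 = vnorm (U *ᵥ (Uᵀ *ᵥ x)) ^ 2 + vnorm (x - U *ᵥ (Uᵀ *ᵥ x)) ^ 2 := by
  have hpx : (U *ᵥ (Uᵀ *ᵥ x)) ⬝ᵥ x = (U *ᵥ (Uᵀ *ᵥ x)) ⬝ᵥ (U *ᵥ (Uᵀ *ᵥ x)) := by
    rw [hU.dotProduct_mulVec, Matrix.dotProduct_mulVec, vecMul_transpose]
  simp only [vnorm_sq, sub_dotProduct, dotProduct_sub, dotProduct_comm x, hpx]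
  ring

theorem vnorm_transpose_mulVec_mulVec (hU : OrthonormalCols U) (x : Fin d → ℝ) :
    vnorm (Uᵀ *ᵥ (U *ᵥ x)) = vnorm (U *ᵥ x) := by
  rw [mulVec_mulVec, hU, one_mulVec, hU.vnorm_mulVec]

end OrthonormalCols

namespace Matrix

variable {l m k : Type*} [Fintype m] [Fintype k]

noncomputable def redirect (A : Matrix m k ℝ) (b : k → ℝ) (z : m → ℝ) : Matrix m k ℝ :=
  A + vecMulVec (z - A *ᵥ b) b

theorem mul_redirect [Fintype l] (B : Matrix l m ℝ) (A : Matrix m k ℝ) (b : k → ℝ) (z : m → ℝ) :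
    B * redirect A b z = redirect (B * A) b (B *ᵥ z) := by
  rw [redirect, redirect, Matrix.mul_add, mul_vecMulVec, mulVec_sub, mulVec_mulVec]

theorem sum_sq_add_vecMulVec (A : Matrix m k ℝ) (y : m → ℝ) (b : k → ℝ) :
    ∑ i, ∑ j, (A + vecMulVec y b) i j ^ 2
      = ∑ i, ∑ j, A i j ^ 2 + 2 * (y ⬝ᵥ A *ᵥ b) + (y ⬝ᵥ y) * (b ⬝ᵥ b) := by
  have row (i : m) : ∑ j, (A i j + y i * b j) ^ 2
      = ∑ j, A i j ^ 2 + 2 * (y i * (A *ᵥ b) i) + y i * y i * (b ⬝ᵥ b) := by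
    simp only [mulVec, dotProduct, Finset.mul_sum, ← Finset.sum_add_distrib]
    exact Finset.sum_congr rfl fun j _ => by ring
  simp only [Matrix.add_apply, vecMulVec_apply, row, Finset.sum_add_distrib, ← Finset.mul_sum,
    ← Finset.sum_mul, dotProduct]

theorem sum_sq_redirect (A : Matrix m k ℝ) {b : k → ℝ} (hb : b ⬝ᵥ b = 1) (z : m → ℝ) :
    ∑ i, ∑ j, redirect A b z i j ^ 2 = ∑ i, ∑ j, A i j ^ 2 - (A *ᵥ b) ⬝ᵥ (A *ᵥ b) + z ⬝ᵥ z := by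
  rw [redirect, sum_sq_add_vecMulVec, hb]
  simp only [sub_dotProduct, dotProduct_sub, dotProduct_comm z]
  ring

end Matrix

theorem Real.sqrt_one_add_div_sq {P : ℝ} (hP : 0 < P) (R : ℝ) :
    √(1 + (R / P) ^ 2) = √(P ^ 2 + R ^ 2) / P := by
  rw [div_pow, one_add_div (by positivity), Real.sqrt_div' _ (by positivity), Real.sqrt_sq hP.le]

theorem Real.cos_arctan_div {P : ℝ} (hP : 0 < P) (R : ℝ) :
    Real.cos (Real.arctan (R / P)) = P / √(P ^ 2 + R ^ 2) := by
  rw [Real.cos_arctan, Real.sqrt_one_add_div_sq hP, one_div_div]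

theorem Real.sin_arctan_div {P : ℝ} (hP : 0 < P) (R : ℝ) :
    Real.sin (Real.arctan (R / P)) = R / √(P ^ 2 + R ^ 2) := by
  rw [Real.sin_arctan, Real.sqrt_one_add_div_sq hP, div_div_div_cancel_right₀ hP.ne']

theorem OrthonormalCols.grouseUpdate_arctan {n d : ℕ} {U : Matrix (Fin n) (Fin d) ℝ}
    (hU : OrthonormalCols U) {x : Fin n → ℝ} (hp : U *ᵥ (Uᵀ *ᵥ x) ≠ 0)
    (hr : x - U *ᵥ (Uᵀ *ᵥ x) ≠ 0) :
    grouseUpdate U x (Real.arctan (vnorm (x - U *ᵥ (Uᵀ *ᵥ x)) / vnorm (U *ᵥ (Uᵀ *ᵥ x))))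
      = redirect U ((vnorm (Uᵀ *ᵥ x))⁻¹ • (Uᵀ *ᵥ x)) ((vnorm x)⁻¹ • x) := by
  have hP := vnorm_pos hp
  have hR := vnorm_pos hr
  have hx : √(vnorm (U *ᵥ (Uᵀ *ᵥ x)) ^ 2 + vnorm (x - U *ᵥ (Uᵀ *ᵥ x)) ^ 2) = vnorm x := by
    rw [← hU.vnorm_sq_eq_add, Real.sqrt_sq (vnorm_nonneg x)]
  have hV : 0 < vnorm x := hx ▸ Real.sqrt_pos.mpr (by positivity)
  have hw : 0 < vnorm (Uᵀ *ᵥ x) := hU.vnorm_mulVec _ ▸ hP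
  ext i j
  simp only [grouseUpdate]
  rw [Real.cos_arctan_div hP, Real.sin_arctan_div hP, hx, hU.vnorm_mulVec]
  simp only [redirect, mulVec_smul, Matrix.add_apply, Matrix.of_apply, vecMulVec_apply,
    Pi.sub_apply, Pi.smul_apply, smul_eq_mul]
  field_simp
  ring

theorem eps_monotone_noiseless_general {n d : ℕ}
    (Ub U : Matrix (Fin n) (Fin d) ℝ)
    (hUb : OrthonormalCols Ub) (hU : OrthonormalCols U)
    (s : Fin d → ℝ) (v : Fin n → ℝ) (hv : v = Ub *ᵥ s)
    (vpar vperp : Fin n → ℝ)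
    (hvpar : vpar = U *ᵥ (Uᵀ *ᵥ v)) (hvperp : vperp = v - vpar)
    (hpar : vpar ≠ 0) (hperp : vperp ≠ 0) :
    epsDisc Ub U
        - epsDisc Ub (grouseUpdate U v (Real.arctan (vnorm vperp / vnorm vpar)))
      = 1 - vnorm (Ub *ᵥ (Ubᵀ *ᵥ vpar)) ^ 2 / vnorm vpar ^ 2 := by
  subst hvpar hvperp
  have hv0 : v ≠ 0 := by
    rintro rfl
    simp at hpar
  have hw0 : Uᵀ *ᵥ v ≠ 0 := fun h => hpar (by rw [h, mulVec_zero])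
  have hUbv : vnorm (Ubᵀ *ᵥ v) = vnorm v := hv ▸ hUb.vnorm_transpose_mulVec_mulVec s
  have hz : (Ubᵀ *ᵥ ((vnorm v)⁻¹ • v)) ⬝ᵥ (Ubᵀ *ᵥ ((vnorm v)⁻¹ • v)) = 1 := by
    rw [mulVec_smul, ← hUbv]
    exact inv_vnorm_smul_dotProduct_self (hUbv ▸ (vnorm_pos hv0).ne')
  have hAb : ((Ubᵀ * U) *ᵥ ((vnorm (Uᵀ *ᵥ v))⁻¹ • (Uᵀ *ᵥ v)))
        ⬝ᵥ ((Ubᵀ * U) *ᵥ ((vnorm (Uᵀ *ᵥ v))⁻¹ • (Uᵀ *ᵥ v)))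
      = vnorm (Ub *ᵥ (Ubᵀ *ᵥ (U *ᵥ (Uᵀ *ᵥ v)))) ^ 2 / vnorm (U *ᵥ (Uᵀ *ᵥ v)) ^ 2 := by
    rw [← mulVec_mulVec, mulVec_smul, mulVec_smul, ← hU.vnorm_mulVec, smul_dotProduct,
      dotProduct_smul, ← vnorm_sq, hUb.vnorm_mulVec, smul_eq_mul, smul_eq_mul]
    field_simp
  rw [epsDisc, epsDisc, hU.grouseUpdate_arctan hpar hperp, mul_redirect,
    sum_sq_redirect _ (inv_vnorm_smul_dotProduct_self (vnorm_pos hw0).ne'), hz, hAb]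
  ring

/-- **Monotonic improvement of the Frobenius norm discrepancy, noiseless case.**
With observation `v = Ū s`, projection `v_∥ = U Uᵀ v ≠ 0`, residual `v_⊥ = v − v_∥ ≠ 0`,
and the greedy step `θ = arctan(‖v_⊥‖/‖v_∥‖)`, one GROUSE update yields
`ε_t − ε_{t+1} = 1 − ‖Ū Ūᵀ v_∥‖²/‖v_∥‖²`. -/
theorem eps_monotone_noiseless {n d : ℕ} (hd : 0 < d) (hdn : d < n)
    (Ub U : Matrix (Fin n) (Fin d) ℝ)
    (hUb : OrthonormalCols Ub) (hU : OrthonormalCols U)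
    (s : Fin d → ℝ) (v : Fin n → ℝ) (hv : v = Ub *ᵥ s)
    (vpar vperp : Fin n → ℝ)
    (hvpar : vpar = U *ᵥ (Uᵀ *ᵥ v)) (hvperp : vperp = v - vpar)
    (hpar : vpar ≠ 0) (hperp : vperp ≠ 0) :
    epsDisc Ub U
        - epsDisc Ub (grouseUpdate U v (Real.arctan (vnorm vperp / vnorm vpar)))
      = 1 - vnorm (Ub *ᵥ (Ubᵀ *ᵥ vpar)) ^ 2 / vnorm vpar ^ 2 :=
  eps_monotone_noiseless_general Ub U hUb hU s v hv vpar vperp hvpar hvperp hpar hperp
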